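/- arXiv:2205.02590 — 5 statements merged into one kernel-verified Lean document; each statement's English description precedes it below -/
import Mathlib

section
/- Soundness of the split-bl-bl-right abduction rule: let m, m' each be ⊤ or a byte, with m' = ⊤ or m = m'; let κ, κ' be expressions, suppose φ ⊨ 𝔟(ε) = 𝔟(ε') * ε' ≤ ε * ε + κ ≤ ε' + κ' * true, and let z be a variable of size N occurring in none of φ, M, ψ, ε, ε', κ, κ'. If φ * M ⊨ ∃z. ψ * (ε' ↦ m'[ε − ε']) * ((ε + κ) ↦ m'[z]) * (z = κ' − (ε − ε') − κ), then φ * (ε ↦ m[κ]) * M ⊨ ψ * (ε' ↦ m'[κ']). -/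
namespace Broom

abbrev Byte := Fin 256
abbrev Mem := ℕ → Option Byte

/-- Read a byte sequence (little-endian) as an unsigned number. -/
def bytesToNum : List Byte → ℕ
  | [] => 0
  | b :: rest => b.val + 256 * bytesToNum rest

/-- The byte sequence of length `n` representing the number `v` (little-endian). -/
def natToBytes : ℕ → ℕ → List Byte
  | 0, _ => []
  | n + 1, v => (⟨v % 256, Nat.mod_lt _ (by norm_num)⟩ : Byte) :: natToBytes n (v / 256)

/-- The base address of the block of `B` containing `ℓ` (0 if there is none). -/
noncomputable def baseFn (B : Finset (ℕ × ℕ)) (ℓ : ℕ) : ℕ :=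
  if h : ∃ p ∈ B, p.1 ≤ ℓ ∧ ℓ < p.2 then h.choose.1 else 0

/-- The end address of the block of `B` containing `ℓ` (0 if there is none). -/
noncomputable def endFn (B : Finset (ℕ × ℕ)) (ℓ : ℕ) : ℕ :=
  if h : ∃ p ∈ B, p.1 ≤ ℓ ∧ ℓ < p.2 then h.choose.2 else 0

/-- Well-formed configuration (stack, blocks, memory). -/
def WfConfig {Var : Type} (N : ℕ) (sz : Var → ℕ) (s : Var → List Byte)
    (B : Finset (ℕ × ℕ)) (M : Mem) : Prop :=
  (∀ v, (s v).length = sz v) ∧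
  (∀ p ∈ B, 0 < p.1 ∧ p.1 < p.2 ∧ p.2 ≤ 2 ^ (8 * N)) ∧
  (∀ p ∈ B, ∀ q ∈ B, p.1 ≠ q.1 ∨ p.2 ≠ q.2 → p.2 ≤ q.1 ∨ q.2 ≤ p.1) ∧
  (∀ ℓ : ℕ, (M ℓ).isSome → ∃ p ∈ B, p.1 ≤ ℓ ∧ ℓ < p.2)

/-- Expressions of the separation logic. -/
inductive Expr (Var : Type) where
  | const : ℕ → ℕ → Expr Var          -- size (in bytes), value
  | var : Var → Expr Var
  | base : Expr Var → Expr Var        -- 𝔟(·)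
  | ende : Expr Var → Expr Var        -- 𝔢(·)
  | add : Expr Var → Expr Var → Expr Var
  | sub : Expr Var → Expr Var → Expr Var
  | substr : Expr Var → ℕ → ℕ → Expr Var   -- ζ[i..j]

namespace Expr

variable {Var : Type}

def size (sz : Var → ℕ) (N : ℕ) : Expr Var → ℕ
  | const n _ => n
  | var v => sz v
  | base _ => N
  | ende _ => N
  | add e₁ _ => e₁.size sz N
  | sub e₁ _ => e₁.size sz N
  | substr _ i j => j - i

noncomputable def eval (B : Finset (ℕ × ℕ)) (s : Var → List Byte) : Expr Var → ℕ
  | const _ v => v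
  | var x => bytesToNum (s x)
  | base e => baseFn B (e.eval B s)
  | ende e => endFn B (e.eval B s)
  | add e₁ e₂ => e₁.eval B s + e₂.eval B s
  | sub e₁ e₂ => e₁.eval B s - e₂.eval B s
  | substr e i j => (e.eval B s / 256 ^ i) % 256 ^ (j - i)

def fv : Expr Var → Set Var
  | const _ _ => ∅
  | var v => {v}
  | base e => e.fv
  | ende e => e.fv
  | add e₁ e₂ => e₁.fv ∪ e₂.fv
  | sub e₁ e₂ => e₁.fv ∪ e₂.fv
  | substr e _ _ => e.fv

/-- The expression does not use the operators 𝔟(·) and 𝔢(·). -/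
def noBE : Expr Var → Prop
  | const _ _ => True
  | var _ => True
  | base _ => False
  | ende _ => False
  | add e₁ e₂ => e₁.noBE ∧ e₂.noBE
  | sub e₁ e₂ => e₁.noBE ∧ e₂.noBE
  | substr e _ _ => e.noBE

def subst (σ : Var → Expr Var) : Expr Var → Expr Var
  | const n v => const n v
  | var v => σ v
  | base e => base (e.subst σ)
  | ende e => ende (e.subst σ)
  | add e₁ e₂ => add (e₁.subst σ) (e₂.subst σ)
  | sub e₁ e₂ => sub (e₁.subst σ) (e₂.subst σ)
  | substr e i j => substr (e.subst σ) i j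

end Expr

inductive CmpOp where
  | eq | ne | le | lt | ge | gt

def CmpOp.sem : CmpOp → ℕ → ℕ → Prop
  | eq, a, b => a = b
  | ne, a, b => a ≠ b
  | le, a, b => a ≤ b
  | lt, a, b => a < b
  | ge, a, b => b ≤ a
  | gt, a, b => b < a

def CmpOp.compl : CmpOp → CmpOp
  | eq => ne
  | ne => eq
  | le => gt
  | lt => ge
  | ge => lt
  | gt => le

/-- Formulae of the separation logic. `ptsBlk ε none κ` is `ε ↦ ⊤[κ]`,
`ptsBlk ε (some b) κ` is `ε ↦ b[κ]`. -/
inductive SLF (Var : Type) where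
  | emp : SLF Var
  | tt : SLF Var
  | pts : Expr Var → Expr Var → SLF Var
  | ptsBlk : Expr Var → Option Byte → Expr Var → SLF Var
  | cmp : CmpOp → Expr Var → Expr Var → SLF Var
  | star : SLF Var → SLF Var → SLF Var
  | disj : SLF Var → SLF Var → SLF Var
  | exis : Var → SLF Var → SLF Var

/-- `M` is the disjoint union of `M₁` and `M₂`. -/
def msplit (M M₁ M₂ : Mem) : Prop :=
  (∀ ℓ, ¬((M₁ ℓ).isSome ∧ (M₂ ℓ).isSome)) ∧
  (∀ ℓ, M ℓ = if (M₁ ℓ).isSome then M₁ ℓ else M₂ ℓ)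

/-- The byte sequence `M[a, a+n)`. -/
def readBytes (M : Mem) (a n : ℕ) : List Byte :=
  (List.range n).map fun i => (M (a + i)).getD 0

/-- Satisfaction of a separation-logic formula by a configuration. -/
def sat {Var : Type} [DecidableEq Var] (N : ℕ) (sz : Var → ℕ) :
    (Var → List Byte) → Finset (ℕ × ℕ) → Mem → SLF Var → Prop
  | _, _, M, .emp => ∀ ℓ, M ℓ = none
  | _, _, _, .tt => True
  | s, B, M, .pts e₁ e₂ =>
      (∀ ℓ, (M ℓ).isSome ↔ (e₁.eval B s ≤ ℓ ∧ ℓ < e₁.eval B s + e₂.size sz N)) ∧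
      bytesToNum (readBytes M (e₁.eval B s) (e₂.size sz N)) = e₂.eval B s % 256 ^ e₂.size sz N
  | s, B, M, .ptsBlk e₁ m e₂ =>
      (∀ ℓ, (M ℓ).isSome ↔ (e₁.eval B s ≤ ℓ ∧ ℓ < e₁.eval B s + e₂.eval B s)) ∧
      (∀ b, m = some b → ∀ ℓ, e₁.eval B s ≤ ℓ → ℓ < e₁.eval B s + e₂.eval B s → M ℓ = some b)
  | s, B, M, .cmp op e₁ e₂ => (∀ ℓ, M ℓ = none) ∧ op.sem (e₁.eval B s) (e₂.eval B s)
  | s, B, M, .star φ₁ φ₂ => ∃ M₁ M₂, msplit M M₁ M₂ ∧ sat N sz s B M₁ φ₁ ∧ sat N sz s B M₂ φ₂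
  | s, B, M, .disj φ₁ φ₂ => sat N sz s B M φ₁ ∨ sat N sz s B M φ₂
  | s, B, M, .exis x φ => ∃ v : List Byte, v.length = sz x ∧ sat N sz (Function.update s x v) B M φ

namespace SLF

variable {Var : Type}

/-- Free variables of a formula. -/
def fv : SLF Var → Set Var
  | emp => ∅
  | tt => ∅
  | pts e₁ e₂ => e₁.fv ∪ e₂.fv
  | ptsBlk e₁ _ e₂ => e₁.fv ∪ e₂.fv
  | cmp _ e₁ e₂ => e₁.fv ∪ e₂.fv
  | star φ₁ φ₂ => φ₁.fv ∪ φ₂.fv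
  | disj φ₁ φ₂ => φ₁.fv ∪ φ₂.fv
  | exis x φ => φ.fv \ {x}

/-- Symbolic heaps are the disjunction-free formulae. -/
def noDisj : SLF Var → Prop
  | emp => True
  | tt => True
  | pts _ _ => True
  | ptsBlk _ _ _ => True
  | cmp _ _ _ => True
  | star φ₁ φ₂ => φ₁.noDisj ∧ φ₂.noDisj
  | disj _ _ => False
  | exis _ φ => φ.noDisj

/-- Quantifier-free formulae. -/
def qf : SLF Var → Prop
  | emp => True
  | tt => True
  | pts _ _ => True
  | ptsBlk _ _ _ => True
  | cmp _ _ _ => True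
  | star φ₁ φ₂ => φ₁.qf ∧ φ₂.qf
  | disj φ₁ φ₂ => φ₁.qf ∧ φ₂.qf
  | exis _ _ => False

/-- The formula does not use the operators 𝔟(·) and 𝔢(·) in its expressions. -/
def noBE : SLF Var → Prop
  | emp => True
  | tt => True
  | pts e₁ e₂ => e₁.noBE ∧ e₂.noBE
  | ptsBlk e₁ _ e₂ => e₁.noBE ∧ e₂.noBE
  | cmp _ e₁ e₂ => e₁.noBE ∧ e₂.noBE
  | star φ₁ φ₂ => φ₁.noBE ∧ φ₂.noBE
  | disj φ₁ φ₂ => φ₁.noBE ∧ φ₂.noBE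
  | exis _ φ => φ.noBE

/-- Pure formulae: separating conjunctions of pure atoms. -/
def isPure : SLF Var → Prop
  | cmp _ _ _ => True
  | star φ₁ φ₂ => φ₁.isPure ∧ φ₂.isPure
  | _ => False

def subst [DecidableEq Var] (σ : Var → Expr Var) : SLF Var → SLF Var
  | emp => emp
  | tt => tt
  | pts e₁ e₂ => pts (e₁.subst σ) (e₂.subst σ)
  | ptsBlk e₁ m e₂ => ptsBlk (e₁.subst σ) m (e₂.subst σ)
  | cmp op e₁ e₂ => cmp op (e₁.subst σ) (e₂.subst σ)
  | star φ₁ φ₂ => star (φ₁.subst σ) (φ₂.subst σ)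
  | disj φ₁ φ₂ => disj (φ₁.subst σ) (φ₂.subst σ)
  | exis x φ => exis x (φ.subst fun v => if v = x then .var v else σ v)

end SLF

/-- Semantic entailment `φ ⊨ ψ`. -/
def Entails {Var : Type} [DecidableEq Var] (N : ℕ) (sz : Var → ℕ) (φ ψ : SLF Var) : Prop :=
  ∀ s B M, WfConfig N sz s B M → sat N sz s B M φ → sat N sz s B M ψ

/-- Existential quantification over a list of variables. -/
def exisList {Var : Type} : List Var → SLF Var → SLF Var
  | [], φ => φ
  | x :: xs, φ => .exis x (exisList xs φ)

/-- Semantic separating conjunction of memory predicates. -/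
def mstar (P Q : Mem → Prop) : Mem → Prop :=
  fun M => ∃ M₁ M₂, msplit M M₁ M₂ ∧ P M₁ ∧ Q M₂

/-- The singly-linked list-segment predicate `sll_Λ(ε₁, ε₂)`,
parameterized by the segment formula `Λ`. -/
inductive Sll {Var : Type} [DecidableEq Var] (N : ℕ) (sz : Var → ℕ)
    (Lam : Expr Var → Expr Var → SLF Var) (s : Var → List Byte) (B : Finset (ℕ × ℕ)) :
    Mem → Expr Var → Expr Var → Prop where
  | nil {M : Mem} {e₁ e₂ : Expr Var} :
      e₁.eval B s = e₂.eval B s → (∀ ℓ, M ℓ = none) → Sll N sz Lam s B M e₁ e₂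
  | cons {M M₁ M₂ : Mem} {e₁ e₂ : Expr Var} (ℓ : ℕ) :
      ℓ < 2 ^ (8 * N) → e₁.eval B s ≠ e₂.eval B s → msplit M M₁ M₂ →
      sat N sz s B M₁ (Lam e₁ (.const N ℓ)) →
      Sll N sz Lam s B M₂ (.const N ℓ) e₂ → Sll N sz Lam s B M e₁ e₂

/-- The segment formula `Λ` is block-closed. -/
def BlockClosed {Var : Type} [DecidableEq Var] (N : ℕ) (sz : Var → ℕ)
    (Lam : Expr Var → Expr Var → SLF Var) : Prop :=
  ∀ (e₁ e₂ : Expr Var) (s : Var → List Byte) (B : Finset (ℕ × ℕ)) (M : Mem),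
    WfConfig N sz s B M → sat N sz s B M (Lam e₁ e₂) →
    ∀ ℓ, (M ℓ).isSome → ∀ ℓ', baseFn B ℓ ≤ ℓ' → ℓ' < endFn B ℓ → (M ℓ').isSome


section Helpers

variable {Var : Type}

lemma msplit_dom {M M₁ M₂ : Mem} (h : msplit M M₁ M₂) (ℓ : ℕ) :
    (M ℓ).isSome ↔ (M₁ ℓ).isSome ∨ (M₂ ℓ).isSome := by
  rw [h.2 ℓ]; by_cases hh : (M₁ ℓ).isSome <;> simp [hh]

lemma msplit_eq_l {M M₁ M₂ : Mem} (h : msplit M M₁ M₂) (ℓ : ℕ)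
    (hl : (M₁ ℓ).isSome) : M ℓ = M₁ ℓ := by rw [h.2 ℓ, if_pos hl]

lemma msplit_eq_r {M M₁ M₂ : Mem} (h : msplit M M₁ M₂) (ℓ : ℕ)
    (hl : (M₂ ℓ).isSome) : M ℓ = M₂ ℓ := by
  have h1 : ¬ (M₁ ℓ).isSome := fun hc => h.1 ℓ ⟨hc, hl⟩
  rw [h.2 ℓ, if_neg h1]

lemma eval_update [DecidableEq Var] (B : Finset (ℕ × ℕ)) (s : Var → List Byte)
    (z : Var) (v : List Byte) :
    ∀ e : Expr Var, z ∉ e.fv → e.eval B (Function.update s z v) = e.eval B s := by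
  intro e
  induction e with
  | const n w => intro _; rfl
  | var x =>
      intro hz
      simp only [Expr.fv, Set.mem_singleton_iff] at hz
      simp [Expr.eval, Function.update_apply, Ne.symm hz]
  | base e ih => intro hz; simp only [Expr.eval, ih hz]
  | ende e ih => intro hz; simp only [Expr.eval, ih hz]
  | add e₁ e₂ ih₁ ih₂ =>
      intro hz
      simp only [Expr.fv, Set.mem_union, not_or] at hz
      simp only [Expr.eval, ih₁ hz.1, ih₂ hz.2]
  | sub e₁ e₂ ih₁ ih₂ =>
      intro hz
      simp only [Expr.fv, Set.mem_union, not_or] at hz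
      simp only [Expr.eval, ih₁ hz.1, ih₂ hz.2]
  | substr e i j ih => intro hz; simp only [Expr.eval, ih hz]

lemma sat_update [DecidableEq Var] (N : ℕ) (sz : Var → ℕ) (z : Var) (v : List Byte) :
    ∀ (φ : SLF Var) (s : Var → List Byte) (B : Finset (ℕ × ℕ)) (M : Mem),
      z ∉ φ.fv → (sat N sz (Function.update s z v) B M φ ↔ sat N sz s B M φ) := by
  intro φ
  induction φ with
  | emp => intro s B M _; rfl
  | tt => intro s B M _; rfl
  | pts e₁ e₂ =>
      intro s B M hz
      simp only [SLF.fv, Set.mem_union, not_or] at hz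
      simp only [sat, eval_update B s z v e₁ hz.1, eval_update B s z v e₂ hz.2]
  | ptsBlk e₁ m e₂ =>
      intro s B M hz
      simp only [SLF.fv, Set.mem_union, not_or] at hz
      simp only [sat, eval_update B s z v e₁ hz.1, eval_update B s z v e₂ hz.2]
  | cmp op e₁ e₂ =>
      intro s B M hz
      simp only [SLF.fv, Set.mem_union, not_or] at hz
      simp only [sat, eval_update B s z v e₁ hz.1, eval_update B s z v e₂ hz.2]
  | star φ₁ φ₂ ih₁ ih₂ =>
      intro s B M hz
      simp only [SLF.fv, Set.mem_union, not_or] at hz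
      simp only [sat]
      exact exists₂_congr fun M₁ M₂ =>
        and_congr_right fun _ => and_congr (ih₁ s B M₁ hz.1) (ih₂ s B M₂ hz.2)
  | disj φ₁ φ₂ ih₁ ih₂ =>
      intro s B M hz
      simp only [SLF.fv, Set.mem_union, not_or] at hz
      simp only [sat]
      exact or_congr (ih₁ s B M hz.1) (ih₂ s B M hz.2)
  | exis x φ ih =>
      intro s B M hz
      simp only [SLF.fv, Set.mem_diff, Set.mem_singleton_iff, not_and, not_not] at hz
      by_cases hzx : z = x
      · subst hzx
        simp only [sat]
        exact exists_congr fun w => and_congr_right fun _ => by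
          rw [Function.update_idem]
      · have hzφ : z ∉ φ.fv := fun hc => hzx (hz hc)
        simp only [sat]
        refine exists_congr fun w => and_congr_right fun _ => ?_
        rw [Function.update_comm hzx]
        exact ih (Function.update s x w) B M hzφ

lemma wf_sub {N : ℕ} {sz : Var → ℕ} {s : Var → List Byte} {B : Finset (ℕ × ℕ)}
    {M M' : Mem} (hwf : WfConfig N sz s B M)
    (h : ∀ ℓ, (M' ℓ).isSome → (M ℓ).isSome) : WfConfig N sz s B M' :=
  ⟨hwf.1, hwf.2.1, hwf.2.2.1, fun ℓ hℓ => hwf.2.2.2 ℓ (h ℓ hℓ)⟩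

end Helpers

set_option maxHeartbeats 1000000 in
/-- Soundness of the `split-bl-bl-right` abduction rule. Here `m`, `m'`
are each ⊤ (`none`) or a byte, with `m' = ⊤` or `m = m'`; and `z` is a fresh variable
of size `N`. -/
theorem split_bl_bl_right_sound {Var : Type} [DecidableEq Var]
    (N : ℕ) (hN : 1 ≤ N) (sz : Var → ℕ) (hszpos : ∀ v, 1 ≤ sz v)
    (φ Mf ψ : SLF Var) (ε ε' κ κ' : Expr Var)
    (m m' : Option Byte) (hm : m' = none ∨ m = m')
    (hent : Entails N sz φ
      ((((SLF.cmp .eq (.base ε) (.base ε')).star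
          (SLF.cmp .le ε' ε)).star
        (SLF.cmp .le (.add ε κ) (.add ε' κ'))).star .tt))
    (z : Var) (hszz : sz z = N)
    (hzfresh : z ∉ φ.fv ∪ Mf.fv ∪ ψ.fv ∪ ε.fv ∪ ε'.fv ∪ κ.fv ∪ κ'.fv)
    (h : Entails N sz (φ.star Mf)
      (.exis z (((ψ.star (.ptsBlk ε' m' (.sub ε ε'))).star
          (.ptsBlk (.add ε κ) m' (.var z))).star
        (SLF.cmp .eq (.var z) (.sub (.sub κ' (.sub ε ε')) κ))))) :
    Entails N sz ((φ.star (.ptsBlk ε m κ)).star Mf)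
      (ψ.star (.ptsBlk ε' m' κ')) := by
  classical
  intro s B M hwf hsat
  simp only [sat] at hsat
  obtain ⟨M12, M3, hsA, ⟨M1, Mblk, hsB, hφ, hblk⟩, hMf⟩ := hsat
  -- freshness facts
  simp only [Set.mem_union, not_or] at hzfresh
  obtain ⟨⟨⟨⟨⟨⟨hzφ, hzMf⟩, hzψ⟩, hzε⟩, hzε'⟩, hzκ⟩, hzκ'⟩ := hzfresh
  -- the memory without the block part
  set M13 : Mem := fun ℓ => if (M1 ℓ).isSome then M1 ℓ else M3 ℓ with hM13def
  have hM1sub12 : ∀ ℓ, (M1 ℓ).isSome → M12 ℓ = M1 ℓ := fun ℓ hℓ => msplit_eq_l hsB ℓ hℓ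
  have hMblksub12 : ∀ ℓ, (Mblk ℓ).isSome → M12 ℓ = Mblk ℓ := fun ℓ hℓ => msplit_eq_r hsB ℓ hℓ
  have hd13 : msplit M13 M1 M3 := by
    constructor
    · intro ℓ ⟨h1, h3⟩
      exact hsA.1 ℓ ⟨by rw [hM1sub12 ℓ h1]; exact h1, h3⟩
    · intro ℓ; rfl
  have hM13sub : ∀ ℓ, (M13 ℓ).isSome → M ℓ = M13 ℓ := by
    intro ℓ hℓ
    by_cases h1 : (M1 ℓ).isSome
    · have he : M13 ℓ = M1 ℓ := by simp only [hM13def]; rw [if_pos h1]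
      rw [he, ← hM1sub12 ℓ h1]
      exact msplit_eq_l hsA ℓ (by rw [hM1sub12 ℓ h1]; exact h1)
    · have he : M13 ℓ = M3 ℓ := by simp only [hM13def]; rw [if_neg h1]
      rw [he] at hℓ ⊢
      exact msplit_eq_r hsA ℓ hℓ
  have hwf13 : WfConfig N sz s B M13 :=
    wf_sub hwf (fun ℓ hℓ => by rw [hM13sub ℓ hℓ]; exact hℓ)
  have hsat13 : sat N sz s B M13 (φ.star Mf) := ⟨M1, M3, hd13, hφ, hMf⟩
  obtain ⟨v, hvlen, hbig⟩ := h s B M13 hwf13 hsat13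
  set s' := Function.update s z v with hs'def
  simp only [sat] at hbig
  obtain ⟨Mab, Mp, hsP, ⟨Mab2, Mb, hsQ, ⟨Mψ, Ma, hsR, hψ, hpb1⟩, hpb2⟩, hpure⟩ := hbig
  -- evaluation facts
  have hεe : ε.eval B s' = ε.eval B s := eval_update B s z v ε hzε
  have hε'e : ε'.eval B s' = ε'.eval B s := eval_update B s z v ε' hzε'
  have hκe : κ.eval B s' = κ.eval B s := eval_update B s z v κ hzκ
  have hκ'e : κ'.eval B s' = κ'.eval B s := eval_update B s z v κ' hzκ'
  have hsz' : s' z = v := Function.update_self z v s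
  simp only [sat, Expr.eval, CmpOp.sem, hεe, hε'e, hκe, hκ'e, hsz'] at hpb1 hpb2 hpure hblk
  -- pure facts from hent
  have hM1subM : ∀ ℓ, (M1 ℓ).isSome → (M ℓ).isSome := by
    intro ℓ hℓ
    rw [msplit_eq_l hsA ℓ (by rw [hM1sub12 ℓ hℓ]; exact hℓ), hM1sub12 ℓ hℓ]
    exact hℓ
  have hpureφ := hent s B M1 (wf_sub hwf hM1subM) hφ
  simp only [sat, Expr.eval, CmpOp.sem] at hpureφ
  obtain ⟨P12, T, _, ⟨P1, P2, _, ⟨Q1, Q2, _, hc1, hc2⟩, hc3⟩, -⟩ := hpureφ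
  have hle1 : ε'.eval B s ≤ ε.eval B s := hc2.2
  have hle2 : ε.eval B s + κ.eval B s ≤ ε'.eval B s + κ'.eval B s := hc3.2
  have hzv : bytesToNum v = κ'.eval B s - (ε.eval B s - ε'.eval B s) - κ.eval B s := hpure.2
  -- abbreviations
  set a := ε.eval B s
  set a' := ε'.eval B s
  set k := κ.eval B s
  set k' := κ'.eval B s
  set zv := bytesToNum v
  -- domain inclusion chains
  have hMasub13 : ∀ ℓ, (Ma ℓ).isSome → M13 ℓ = Ma ℓ := by
    intro ℓ hℓ
    have h2 : Mab2 ℓ = Ma ℓ := msplit_eq_r hsR ℓ hℓ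
    have h1 : Mab ℓ = Mab2 ℓ := msplit_eq_l hsQ ℓ (by rw [h2]; exact hℓ)
    have h0 : M13 ℓ = Mab ℓ := msplit_eq_l hsP ℓ (by rw [h1, h2]; exact hℓ)
    rw [h0, h1, h2]
  have hMψsub13 : ∀ ℓ, (Mψ ℓ).isSome → M13 ℓ = Mψ ℓ := by
    intro ℓ hℓ
    have h2 : Mab2 ℓ = Mψ ℓ := msplit_eq_l hsR ℓ hℓ
    have h1 : Mab ℓ = Mab2 ℓ := msplit_eq_l hsQ ℓ (by rw [h2]; exact hℓ)
    have h0 : M13 ℓ = Mab ℓ := msplit_eq_l hsP ℓ (by rw [h1, h2]; exact hℓ)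
    rw [h0, h1, h2]
  have hMbsub13 : ∀ ℓ, (Mb ℓ).isSome → M13 ℓ = Mb ℓ := by
    intro ℓ hℓ
    have h1 : Mab ℓ = Mb ℓ := msplit_eq_r hsQ ℓ hℓ
    have h0 : M13 ℓ = Mab ℓ := msplit_eq_l hsP ℓ (by rw [h1]; exact hℓ)
    rw [h0, h1]
  have hMblksubM : ∀ ℓ, (Mblk ℓ).isSome → M ℓ = Mblk ℓ := by
    intro ℓ hℓ
    rw [msplit_eq_l hsA ℓ (by rw [hMblksub12 ℓ hℓ]; exact hℓ), hMblksub12 ℓ hℓ]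
  have hMasubM : ∀ ℓ, (Ma ℓ).isSome → M ℓ = Ma ℓ := fun ℓ hℓ => by
    rw [hM13sub ℓ (by rw [hMasub13 ℓ hℓ]; exact hℓ), hMasub13 ℓ hℓ]
  have hMbsubM : ∀ ℓ, (Mb ℓ).isSome → M ℓ = Mb ℓ := fun ℓ hℓ => by
    rw [hM13sub ℓ (by rw [hMbsub13 ℓ hℓ]; exact hℓ), hMbsub13 ℓ hℓ]
  have hMψsubM : ∀ ℓ, (Mψ ℓ).isSome → M ℓ = Mψ ℓ := fun ℓ hℓ => by
    rw [hM13sub ℓ (by rw [hMψsub13 ℓ hℓ]; exact hℓ), hMψsub13 ℓ hℓ]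
  -- disjointness of Mψ from the block parts
  have hψ_blk : ∀ ℓ, (Mψ ℓ).isSome → ¬ (Mblk ℓ).isSome := by
    intro ℓ hℓ hb
    have h13 : (M13 ℓ).isSome := by rw [hMψsub13 ℓ hℓ]; exact hℓ
    rcases (msplit_dom hd13 ℓ).mp h13 with h1 | h3
    · exact hsB.1 ℓ ⟨h1, hb⟩
    · exact hsA.1 ℓ ⟨by rw [hMblksub12 ℓ hb]; exact hb, h3⟩
  have hψ_a : ∀ ℓ, (Mψ ℓ).isSome → ¬ (Ma ℓ).isSome := fun ℓ hℓ ha => hsR.1 ℓ ⟨hℓ, ha⟩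
  have hψ_b : ∀ ℓ, (Mψ ℓ).isSome → ¬ (Mb ℓ).isSome := fun ℓ hℓ hb =>
    hsQ.1 ℓ ⟨by rw [msplit_eq_l hsR ℓ hℓ]; exact hℓ, hb⟩
  -- total domain of M
  have hdomM : ∀ ℓ, (M ℓ).isSome ↔
      (Mψ ℓ).isSome ∨ (Ma ℓ).isSome ∨ (Mblk ℓ).isSome ∨ (Mb ℓ).isSome := by
    intro ℓ
    have e1 := msplit_dom hsA ℓ
    have e2 := msplit_dom hsB ℓ
    have e13 := msplit_dom hd13 ℓ
    have eP := msplit_dom hsP ℓ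
    have eQ := msplit_dom hsQ ℓ
    have eR := msplit_dom hsR ℓ
    have hMp : Mp ℓ = none := hpure.1 ℓ
    rw [hMp] at eP
    simp only [Option.isSome_none, Bool.false_eq_true, or_false] at eP
    have e13' : (M13 ℓ).isSome ↔ (Mψ ℓ).isSome ∨ (Ma ℓ).isSome ∨ (Mb ℓ).isSome := by
      rw [eP, eQ, eR, or_assoc]
    constructor
    · intro hs
      rcases e1.mp hs with h12 | h3
      · rcases e2.mp h12 with h1 | hbk
        · rcases e13'.mp (e13.mpr (Or.inl h1)) with x | x | x
          · exact Or.inl x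
          · exact Or.inr (Or.inl x)
          · exact Or.inr (Or.inr (Or.inr x))
        · exact Or.inr (Or.inr (Or.inl hbk))
      · rcases e13'.mp (e13.mpr (Or.inr h3)) with x | x | x
        · exact Or.inl x
        · exact Or.inr (Or.inl x)
        · exact Or.inr (Or.inr (Or.inr x))
    · intro hs
      have h13toM : (M13 ℓ).isSome → (M ℓ).isSome := by
        intro hx
        rcases e13.mp hx with h1 | h3
        · exact e1.mpr (Or.inl (e2.mpr (Or.inl h1)))
        · exact e1.mpr (Or.inr h3)
      rcases hs with x | x | x | x
      · exact h13toM (e13'.mpr (Or.inl x))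
      · exact h13toM (e13'.mpr (Or.inr (Or.inl x)))
      · exact e1.mpr (Or.inl (e2.mpr (Or.inr x)))
      · exact h13toM (e13'.mpr (Or.inr (Or.inr x)))
  -- coverage of the target interval
  have hcover : ∀ ℓ, a' ≤ ℓ → ℓ < a' + k' →
      (Ma ℓ).isSome ∨ (Mblk ℓ).isSome ∨ (Mb ℓ).isSome := by
    intro ℓ h1 h2
    rcases (show (a' ≤ ℓ ∧ ℓ < a' + (a - a')) ∨ (a ≤ ℓ ∧ ℓ < a + k) ∨
        (a + k ≤ ℓ ∧ ℓ < a + k + zv) by omega) with hr | hr | hr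
    · exact Or.inl ((hpb1.1 ℓ).mpr hr)
    · exact Or.inr (Or.inl ((hblk.1 ℓ).mpr hr))
    · exact Or.inr (Or.inr ((hpb2.1 ℓ).mpr hr))
  -- component domains are inside the target interval
  have hinside : ∀ ℓ, (Ma ℓ).isSome ∨ (Mblk ℓ).isSome ∨ (Mb ℓ).isSome →
      a' ≤ ℓ ∧ ℓ < a' + k' := by
    intro ℓ hr
    rcases hr with hr | hr | hr
    · have := (hpb1.1 ℓ).mp hr; omega
    · have := (hblk.1 ℓ).mp hr; omega
    · have := (hpb2.1 ℓ).mp hr; omega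
  -- the final splitting
  set Mout : Mem := fun ℓ => if (Mψ ℓ).isSome then none else M ℓ with hMoutdef
  have hMoutψ : ∀ ℓ, (Mψ ℓ).isSome → Mout ℓ = none := by
    intro ℓ hℓ; simp only [hMoutdef]; rw [if_pos hℓ]
  have hMoutM : ∀ ℓ, ¬ (Mψ ℓ).isSome → Mout ℓ = M ℓ := by
    intro ℓ hℓ; simp only [hMoutdef]; rw [if_neg hℓ]
  simp only [sat]
  refine ⟨Mψ, Mout, ⟨?_, ?_⟩, (sat_update N sz z v ψ s B Mψ hzψ).mp hψ, ?_, ?_⟩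
  · intro ℓ ⟨h1, h2⟩
    rw [hMoutψ ℓ h1] at h2
    simp at h2
  · intro ℓ
    by_cases hℓ : (Mψ ℓ).isSome
    · rw [if_pos hℓ]; exact hMψsubM ℓ hℓ
    · rw [if_neg hℓ]; exact (hMoutM ℓ hℓ).symm
  · -- domain of Mout
    intro ℓ
    by_cases hℓ : (Mψ ℓ).isSome
    · rw [hMoutψ ℓ hℓ]
      simp only [Option.isSome_none, Bool.false_eq_true, false_iff, not_and, not_lt]
      intro h1
      by_contra h2
      push_neg at h2
      rcases hcover ℓ h1 h2 with hc | hc | hc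
      · exact hψ_a ℓ hℓ hc
      · exact hψ_blk ℓ hℓ hc
      · exact hψ_b ℓ hℓ hc
    · rw [hMoutM ℓ hℓ]
      constructor
      · intro hs
        rcases (hdomM ℓ).mp hs with hc | hc | hc | hc
        · exact absurd hc hℓ
        · exact hinside ℓ (Or.inl hc)
        · exact hinside ℓ (Or.inr (Or.inl hc))
        · exact hinside ℓ (Or.inr (Or.inr hc))
      · intro ⟨h1, h2⟩
        exact (hdomM ℓ).mpr (Or.inr (hcover ℓ h1 h2))
  · -- contents of Mout
    intro b hb ℓ h1 h2
    rcases hcover ℓ h1 h2 with hc | hc | hc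
    · have hv : Ma ℓ = some b :=
        hpb1.2 b hb ℓ ((hpb1.1 ℓ).mp hc).1 ((hpb1.1 ℓ).mp hc).2
      rw [hMoutM ℓ (fun hp => hψ_a ℓ hp hc), hMasubM ℓ hc, hv]
    · have hmb : m = some b := by
        rcases hm with hm' | hm'
        · rw [hm'] at hb; exact absurd hb (by simp)
        · rw [hm', hb]
      have hv : Mblk ℓ = some b :=
        hblk.2 b hmb ℓ ((hblk.1 ℓ).mp hc).1 ((hblk.1 ℓ).mp hc).2
      rw [hMoutM ℓ (fun hp => hψ_blk ℓ hp hc), hMblksubM ℓ hc, hv]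
    · have hv : Mb ℓ = some b :=
        hpb2.2 b hb ℓ ((hpb2.1 ℓ).mp hc).1 ((hpb2.1 ℓ).mp hc).2
      rw [hMoutM ℓ (fun hp => hψ_b ℓ hp hc), hMbsubM ℓ hc, hv]


end Broom
end

section
/- Soundness of the slseg-remove rule for left-hand-side list segments: let Λ be a block-closed segment formula. If φ ⊨ (ε = ζ) * true and φ * M ⊨ ψ, then φ * sll_Λ(ε, ζ) * M ⊨ ψ. -/
namespace Broom

/-- Soundness of the `slseg-remove` rule for left-hand-side list
segments: for a block-closed segment formula `Λ`, if `φ ⊨ (ε = ζ) * true` and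
`φ * M ⊨ ψ`, then `φ * sll_Λ(ε, ζ) * M ⊨ ψ`. -/
theorem slseg_remove_left_sound {Var : Type} [DecidableEq Var]
    (N : ℕ) (hN : 1 ≤ N) (sz : Var → ℕ) (hszpos : ∀ v, 1 ≤ sz v)
    (Lam : Expr Var → Expr Var → SLF Var) (hbc : BlockClosed N sz Lam)
    (φ Mf ψ : SLF Var) (ε ζ : Expr Var)
    (hent : Entails N sz φ ((SLF.cmp .eq ε ζ).star .tt))
    (h : ∀ s B M, WfConfig N sz s B M →
      mstar (fun m => sat N sz s B m φ) (fun m => sat N sz s B m Mf) M →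
      sat N sz s B M ψ) :
    ∀ s B M, WfConfig N sz s B M →
      mstar (mstar (fun m => sat N sz s B m φ) (fun m => Sll N sz Lam s B m ε ζ))
        (fun m => sat N sz s B m Mf) M →
      sat N sz s B M ψ := by
  intro s B M hwf hm
  obtain ⟨Mout, Mf', hsp, ⟨M₁, M₂, hsp', hφ, hsll⟩, hMf⟩ := hm
  -- submemory well-formedness
  have hsub : ∀ m : Mem, (∀ ℓ, (m ℓ).isSome → (M ℓ).isSome) → WfConfig N sz s B m := by
    intro m hle
    obtain ⟨h1, h2, h3, h4⟩ := hwf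
    exact ⟨h1, h2, h3, fun ℓ hs => h4 ℓ (hle ℓ hs)⟩
  have hMout_le : ∀ ℓ, (Mout ℓ).isSome → (M ℓ).isSome := by
    intro ℓ hs
    rw [hsp.2 ℓ]
    split <;> simp_all
  have hM₁_le : ∀ ℓ, (M₁ ℓ).isSome → (Mout ℓ).isSome := by
    intro ℓ hs
    rw [hsp'.2 ℓ]
    simp_all
  have hwf₁ : WfConfig N sz s B M₁ := hsub M₁ (fun ℓ hs => hMout_le ℓ (hM₁_le ℓ hs))
  -- from entailment, ε = ζ
  have heq : ε.eval B s = ζ.eval B s := by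
    obtain ⟨Ma, Mb, _, hcmp, _⟩ := hent s B M₁ hwf₁ hφ
    exact hcmp.2
  -- Sll must be nil
  have hM₂ : ∀ ℓ, M₂ ℓ = none := by
    cases hsll with
    | nil _ hn => exact hn
    | cons ℓ _ hne _ _ _ => exact absurd heq hne
  have hMout : Mout = M₁ := by
    funext ℓ
    rw [hsp'.2 ℓ, hM₂ ℓ]
    split
    · rfl
    · exact (Option.not_isSome_iff_eq_none.mp (by assumption)).symm
  subst hMout
  exact h s B M hwf ⟨Mout, Mf', hsp, hφ, hMf⟩

end Broom
end

section
/- Soundness of the slseg-remove-right abduction rule: let Λ be a block-closed segment formula. If φ ⊨ (ε = ζ) * true and φ * M ⊨ ψ, then φ * M ⊨ ψ * sll_Λ(ε, ζ). -/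
namespace Broom

/-- Soundness of the `slseg-remove-right` abduction rule: for a
block-closed segment formula `Λ`, if `φ ⊨ (ε = ζ) * true` and `φ * M ⊨ ψ`, then
`φ * M ⊨ ψ * sll_Λ(ε, ζ)`. -/
theorem slseg_remove_right_sound {Var : Type} [DecidableEq Var]
    (N : ℕ) (hN : 1 ≤ N) (sz : Var → ℕ) (hszpos : ∀ v, 1 ≤ sz v)
    (Lam : Expr Var → Expr Var → SLF Var) (hbc : BlockClosed N sz Lam)
    (φ Mf ψ : SLF Var) (ε ζ : Expr Var)
    (hent : Entails N sz φ ((SLF.cmp .eq ε ζ).star .tt))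
    (h : ∀ s B M, WfConfig N sz s B M →
      mstar (fun m => sat N sz s B m φ) (fun m => sat N sz s B m Mf) M →
      sat N sz s B M ψ) :
    ∀ s B M, WfConfig N sz s B M →
      mstar (fun m => sat N sz s B m φ) (fun m => sat N sz s B m Mf) M →
      mstar (fun m => sat N sz s B m ψ) (fun m => Sll N sz Lam s B m ε ζ) M := by
  intro s B M hwf hsplit
  -- extract ε = ζ from the φ part
  obtain ⟨M₁, M₂, hms, hφ, hMf⟩ := hsplit
  have hwf₁ : WfConfig N sz s B M₁ := by
    obtain ⟨h1, h2, h3, h4⟩ := hwf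
    refine ⟨h1, h2, h3, fun ℓ hsome => ?_⟩
    apply h4
    rw [hms.2 ℓ, if_pos hsome]
    exact hsome
  have heq : ε.eval B s = ζ.eval B s := by
    have := hent s B M₁ hwf₁ hφ
    obtain ⟨M₁', M₂', _, hc, _⟩ := this
    exact hc.2
  refine ⟨M, (fun _ => none), ⟨fun ℓ => by simp, fun ℓ => ?_⟩,
    h s B M hwf ⟨M₁, M₂, hms, hφ, hMf⟩, Sll.nil heq (fun _ => rfl)⟩
  cases hM : M ℓ <;> simp [hM]

end Broom
end

section
/- Soundness of discharging pure entailments via unsatisfiability of the complemented constraint: let φ₁ be a separation-logic formula, let ε, ζ be expressions of the same size, let ⋈ ∈ {=,≠,≤,<,≥,>} be a comparison (on values read as unsigned numbers), and let ⋈̄ be its complement (≠, =, >, ≥, <, ≤, respectively). If the formula φ₁ * (ε ⋈̄ ζ) is unsatisfiable (has no model), then φ₁ ⊨ (ε ⋈ ζ) * true. -/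
namespace Broom

/-- Soundness of discharging pure entailments via unsatisfiability of
the complemented constraint: if `φ₁ * (ε ⋈̄ ζ)` has no model (where `⋈̄` is the
complement of `⋈`), then `φ₁ ⊨ (ε ⋈ ζ) * true`. -/
theorem pure_entailment_via_unsat {Var : Type} [DecidableEq Var]
    (N : ℕ) (hN : 1 ≤ N) (sz : Var → ℕ) (hszpos : ∀ v, 1 ≤ sz v)
    (φ₁ : SLF Var) (ε ζ : Expr Var)
    (hsize : ε.size sz N = ζ.size sz N)
    (op : CmpOp)
    (hunsat : ¬ ∃ s B M, WfConfig N sz s B M ∧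
      sat N sz s B M (φ₁.star (.cmp op.compl ε ζ))) :
    Entails N sz φ₁ ((SLF.cmp op ε ζ).star .tt) := by
  intro s B M hwf hsat
  have hop : op.sem (ε.eval B s) (ζ.eval B s) := by
    by_contra h
    apply hunsat
    refine ⟨s, B, M, hwf, M, (fun _ => none), ⟨fun ℓ => by simp, fun ℓ => by
      by_cases hℓ : (M ℓ).isSome <;> simp [hℓ] <;> exact (Option.not_isSome_iff_eq_none.mp hℓ)⟩,
      hsat, fun ℓ => rfl, ?_⟩
    cases op <;> simp_all [CmpOp.sem, CmpOp.compl] <;> omega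
  exact ⟨(fun _ => none), M, ⟨fun ℓ => by simp, fun ℓ => by simp⟩,
    ⟨fun ℓ => rfl, hop⟩, trivial⟩

end Broom
end

section
/- Validity of the separation constraint generated by the SMT translation for pairs of points-to predicates: let (s,B,M) be a configuration and suppose (s,B,M) ⊨ (ε₁ ↦ Υ₁) * (ε₂ ↦ Υ₂) * true, where each Υᵢ is a value expression, a constant-byte block ⊤[·], or an arbitrary-contents block, and the byte counts n₁ = size(Υ₁) and n₂ = size(Υ₂) evaluated in (s,B) are both positive. Let a = ⟦ε₁⟧ and b = ⟦ε₂⟧. Then either 𝔟_B(a) ≠ 𝔟_B(b), or 𝔟_B(a) = 𝔟_B(b) and (a + n₁ ≤ b or b + n₂ ≤ a). -/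
namespace Broom

/-- Right-hand sides of points-to predicates: a value expression, or a block of
constant-byte or arbitrary contents. -/
inductive PtsRhs (Var : Type) where
  | val : Expr Var → PtsRhs Var                  -- ε ↦ ζ
  | blk : Option Byte → Expr Var → PtsRhs Var    -- ε ↦ m[κ] (m = ⊤ is `none`)

/-- The points-to formula `ε ↦ Υ`. -/
def PtsRhs.toSLF {Var : Type} (ε : Expr Var) : PtsRhs Var → SLF Var
  | .val e => .pts ε e
  | .blk m e => .ptsBlk ε m e

/-- The byte count of a points-to right-hand side, evaluated in `(s,B)`. -/
noncomputable def PtsRhs.count {Var : Type} (N : ℕ) (sz : Var → ℕ)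
    (B : Finset (ℕ × ℕ)) (s : Var → List Byte) : PtsRhs Var → ℕ
  | .val e => e.size sz N
  | .blk _ e => e.eval B s

/-- Validity of the separation constraint generated by the SMT
translation for pairs of points-to predicates: if a well-formed configuration satisfies
`(ε₁ ↦ Υ₁) * (ε₂ ↦ Υ₂) * true` with positive byte counts `n₁, n₂`, then, with
`a = ⟦ε₁⟧` and `b = ⟦ε₂⟧`, either `𝔟_B(a) ≠ 𝔟_B(b)`, or `𝔟_B(a) = 𝔟_B(b)` and
(`a + n₁ ≤ b` or `b + n₂ ≤ a`). -/
theorem smt_separation_constraint_valid {Var : Type} [DecidableEq Var]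
    (N : ℕ) (hN : 1 ≤ N) (sz : Var → ℕ) (hszpos : ∀ v, 1 ≤ sz v)
    (ε₁ ε₂ : Expr Var) (Υ₁ Υ₂ : PtsRhs Var)
    (s : Var → List Byte) (B : Finset (ℕ × ℕ)) (M : Mem)
    (hwf : WfConfig N sz s B M)
    (hn₁ : 0 < Υ₁.count N sz B s) (hn₂ : 0 < Υ₂.count N sz B s)
    (hsat : sat N sz s B M (((Υ₁.toSLF ε₁).star (Υ₂.toSLF ε₂)).star .tt)) :
    baseFn B (ε₁.eval B s) ≠ baseFn B (ε₂.eval B s) ∨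
    (baseFn B (ε₁.eval B s) = baseFn B (ε₂.eval B s) ∧
      (ε₁.eval B s + Υ₁.count N sz B s ≤ ε₂.eval B s ∨
       ε₂.eval B s + Υ₂.count N sz B s ≤ ε₁.eval B s)) := by
  by_cases hb : baseFn B (ε₁.eval B s) = baseFn B (ε₂.eval B s)
  · right
    refine ⟨hb, ?_⟩
    obtain ⟨M₁₂, Mt, hsp, ⟨M₁, M₂, hsp', h1, h2⟩, -⟩ := hsat
    have hd1 : ∀ ℓ, (M₁ ℓ).isSome ↔
        (ε₁.eval B s ≤ ℓ ∧ ℓ < ε₁.eval B s + Υ₁.count N sz B s) := by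
      cases Υ₁ with
      | val e => exact h1.1
      | blk m e => exact h1.1
    have hd2 : ∀ ℓ, (M₂ ℓ).isSome ↔
        (ε₂.eval B s ≤ ℓ ∧ ℓ < ε₂.eval B s + Υ₂.count N sz B s) := by
      cases Υ₂ with
      | val e => exact h2.1
      | blk m e => exact h2.1
    by_contra hcon
    push_neg at hcon
    obtain ⟨hc1, hc2⟩ := hcon
    set ℓ := max (ε₁.eval B s) (ε₂.eval B s) with hℓ
    have hℓ1 : (M₁ ℓ).isSome := (hd1 ℓ).2 ⟨le_max_left _ _, by
      rcases max_cases (ε₁.eval B s) (ε₂.eval B s) with ⟨he, _⟩ | ⟨he, _⟩ <;> omega⟩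
    have hℓ2 : (M₂ ℓ).isSome := (hd2 ℓ).2 ⟨le_max_right _ _, by
      rcases max_cases (ε₁.eval B s) (ε₂.eval B s) with ⟨he, _⟩ | ⟨he, _⟩ <;> omega⟩
    exact hsp'.1 ℓ ⟨hℓ1, hℓ2⟩
  · exact Or.inl hb

end Broom
end
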